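/- arXiv:1408.0743 — 3 statements merged into one kernel-verified Lean document; each statement's English description precedes it below -/
import Mathlib

section
/- Let K be a field, n, m coprime positive integers, and f(x,y) ∈ K[x,y] a quasihomogeneous polynomial for the weight ω(i,j) = n·i + m·j, of ω-degree w. Then f can be written uniquely as f(x,y) = x^u · y^v · q(x^m, y^n), where q(s1,s2) ∈ K[s1,s2] is homogeneous of degree d, q is coprime with s1·s2, and w = n·u + m·v + n·m·d. -/
/-!
Put `T(k) = (u + m k₀, v + n k₁)`. Then `x^u y^v q(x^m, y^n)` is the polynomial whose coefficient
at `T(k)` is the coefficient of `q` at `k`, all others being zero, and its `ω`-degree at `T(k)` is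
`n u + m v + n m |k|`. Given `f`, let `u` and `v` be the least exponents of `x` and `y` occurring
in `f`. Two exponents `(a, b)`, `(a', b')` of `f` satisfy `n (a - a') = m (b' - b)`, so by
coprimality `m ∣ a - u` and `n ∣ b - v`: every exponent of `f` is a `T(k)`, which produces `q`.
Conversely `s₁ ∤ q` and `s₂ ∤ q` say exactly that `u` and `v` are the least exponents of `x` and
`y` in `x^u y^v q(x^m, y^n)`, and `T` is injective; this gives uniqueness.
-/

theorem Nat.exists_eq_add_mul_of_mul_add_mul_eq {n m a b a' b' : ℕ} (hcop : n.Coprime m)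
    (h : n * a + m * b = n * a' + m * b') (ha : a' ≤ a) : ∃ i, a = a' + m * i := by
  obtain ⟨t, rfl⟩ := Nat.exists_eq_add_of_le ha
  have ht : m * b + n * t = m * b' := by rw [mul_add] at h; omega
  have hdvd : m ∣ n * t := (Nat.dvd_add_right (dvd_mul_right m b)).mp (ht ▸ dvd_mul_right m b')
  obtain ⟨i, rfl⟩ := hcop.symm.dvd_of_dvd_mul_left hdvd
  exact ⟨i, rfl⟩

namespace MvPolynomial

variable {σ R : Type*} [CommSemiring R]

theorem X_dvd_iff_forall_mem_support {i : σ} {p : MvPolynomial σ R} :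
    X i ∣ p ↔ ∀ m ∈ p.support, m i ≠ 0 := by
  classical
  constructor
  · rintro ⟨r, rfl⟩ m hm
    rw [mem_support_iff, coeff_X_mul'] at hm
    exact Finsupp.mem_support_iff.mp (by_contra fun h => hm (if_neg h))
  · intro h
    rw [X_dvd_iff_modMonomial_eq_zero]
    ext m
    rw [coeff_zero]
    by_cases hm : Finsupp.single i 1 ≤ m
    · exact coeff_modMonomial_of_le _ hm
    rw [coeff_modMonomial_of_not_le _ hm]
    contrapose hm
    exact Finsupp.single_le_iff.2 (Nat.one_le_iff_ne_zero.2 (h m (mem_support_iff.2 hm)))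

section MapDomain

variable {T : (σ →₀ ℕ) → σ →₀ ℕ}

theorem coeff_mapDomain (hT : Function.Injective T) (q : MvPolynomial σ R) (k : σ →₀ ℕ) :
    coeff (T k) (AddMonoidAlgebra.mapDomain T q) = coeff k q :=
  Finsupp.mapDomain_apply hT _ k

theorem support_mapDomain [DecidableEq σ] (hT : Function.Injective T) (q : MvPolynomial σ R) :
    support (AddMonoidAlgebra.mapDomain T q) = q.support.image T :=
  Finsupp.mapDomain_support_of_injective hT _

end MapDomain

section ScaleShift

variable [Fintype σ]

noncomputable def scaleShift (a c : σ → ℕ) (k : σ →₀ ℕ) : σ →₀ ℕ :=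
  Finsupp.equivFunOnFinite.symm fun i => a i + c i * k i

variable {a c : σ → ℕ}

@[simp]
theorem scaleShift_apply (k : σ →₀ ℕ) (i : σ) : scaleShift a c k i = a i + c i * k i := rfl

theorem scaleShift_injective (hc : ∀ i, c i ≠ 0) : Function.Injective (scaleShift a c) := by
  intro k k' h
  ext i
  have := DFunLike.congr_fun h i
  simp only [scaleShift_apply, add_right_inj] at this
  exact Nat.eq_of_mul_eq_mul_left (Nat.pos_of_ne_zero (hc i)) this

theorem prod_X_pow_mul_aeval_X_pow (a c : σ → ℕ) (q : MvPolynomial σ R) :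
    (∏ i, X i ^ a i) * aeval (fun i => X i ^ c i) q =
      AddMonoidAlgebra.mapDomain (scaleShift a c) q := by
  induction q using MvPolynomial.induction_on' with
  | monomial k r =>
    rw [aeval_monomial, ← single_eq_monomial, AddMonoidAlgebra.mapDomain_single,
      single_eq_monomial, monomial_eq, algebraMap_eq]
    simp only [Finsupp.prod_fintype _ _ (fun _ => pow_zero _), scaleShift_apply, pow_add,
      pow_mul, Finset.prod_mul_distrib]
    ring
  | add p q hp hq => rw [map_add, mul_add, hp, hq, AddMonoidAlgebra.mapDomain_add]

theorem weight_scaleShift {w : σ → ℕ} {N : ℕ} (hcw : ∀ i, c i * w i = N) (k : σ →₀ ℕ) :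
    Finsupp.weight w (scaleShift a c k) = ∑ i, a i * w i + N * k.degree := by
  simp only [Finsupp.weight_eq_sum, Finsupp.degree_eq_sum, scaleShift_apply, smul_eq_mul,
    add_mul, Finset.sum_add_distrib, Finset.mul_sum]
  congr 1
  refine Finset.sum_congr rfl fun i _ => ?_
  rw [← hcw i]
  ring

theorem isHomogeneous_of_isWeightedHomogeneous_mapDomain_scaleShift {w : σ → ℕ} {N d : ℕ}
    {q : MvPolynomial σ R} (hc : ∀ i, c i ≠ 0) (hcw : ∀ i, c i * w i = N) (hN : N ≠ 0)
    (h : IsWeightedHomogeneous w (AddMonoidAlgebra.mapDomain (scaleShift a c) q)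
      (∑ i, a i * w i + N * d)) :
    q.IsHomogeneous d := by
  intro k hk
  have := h (by rwa [coeff_mapDomain (scaleShift_injective hc)])
  rw [weight_scaleShift hcw, add_right_inj, mul_right_inj' hN] at this
  rwa [Finsupp.degree_eq_weight_one] at this

theorem not_X_dvd_of_mem_support_mapDomain_scaleShift (hc : ∀ i, c i ≠ 0) {q : MvPolynomial σ R}
    {e : σ →₀ ℕ} (he : e ∈ support (AddMonoidAlgebra.mapDomain (scaleShift a c) q)) {i : σ}
    (hei : e i = a i) : ¬ X i ∣ q := by
  classical
  rw [support_mapDomain (scaleShift_injective hc), Finset.mem_image] at he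
  obtain ⟨k, hk, rfl⟩ := he
  rw [X_dvd_iff_forall_mem_support]
  intro hdvd
  simp only [scaleShift_apply, add_eq_left, mul_eq_zero] at hei
  exact hei.elim (hc i) (hdvd k hk)

theorem isLeast_apply_support_mapDomain_scaleShift (hc : ∀ i, c i ≠ 0) {q : MvPolynomial σ R}
    {i : σ} (hq : ¬ X i ∣ q) :
    IsLeast ((fun e : σ →₀ ℕ => e i) ''
      ↑(support (AddMonoidAlgebra.mapDomain (scaleShift a c) q))) (a i) := by
  classical
  rw [support_mapDomain (scaleShift_injective hc), Finset.coe_image, Set.image_image]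
  obtain ⟨k, hk, hki⟩ : ∃ k ∈ q.support, k i = 0 := by
    simpa [X_dvd_iff_forall_mem_support] using hq
  refine ⟨⟨k, hk, by simp [hki]⟩, ?_⟩
  rintro _ ⟨k', -, rfl⟩
  simp

theorem eq_of_mapDomain_scaleShift_eq (hc : ∀ i, c i ≠ 0) {a' : σ → ℕ}
    {q q' : MvPolynomial σ R} (hq : ∀ i, ¬ X i ∣ q) (hq' : ∀ i, ¬ X i ∣ q')
    (h : (AddMonoidAlgebra.mapDomain (scaleShift a c) q : MvPolynomial σ R) =
      AddMonoidAlgebra.mapDomain (scaleShift a' c) q') :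
    a = a' ∧ q = q' := by
  obtain rfl : a = a' := by
    ext i
    have hleast' := isLeast_apply_support_mapDomain_scaleShift (a := a') hc (hq' i)
    rw [← h] at hleast'
    exact (isLeast_apply_support_mapDomain_scaleShift hc (hq i)).unique hleast'
  exact ⟨rfl, AddMonoidAlgebra.mapDomain_injective (scaleShift_injective hc) h⟩

end ScaleShift

theorem exists_eq_mapDomain_scaleShift_of_isWeightedHomogeneous {n m w : ℕ} (hn : 0 < n)
    (hm : 0 < m) (hcop : n.Coprime m) {f : MvPolynomial (Fin 2) R} (hf : f ≠ 0)
    (hfw : IsWeightedHomogeneous ![n, m] f w) :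
    ∃ (u v : ℕ) (q : MvPolynomial (Fin 2) R), (∀ i, ¬ X i ∣ q) ∧
      f = AddMonoidAlgebra.mapDomain (scaleShift ![u, v] ![m, n]) q := by
  have hw : ∀ e ∈ f.support, n * e 0 + m * e 1 = w := fun e he => by
    simpa [Finsupp.weight_eq_sum, Fin.sum_univ_two, mul_comm] using hfw (mem_support_iff.1 he)
  obtain ⟨e₀, he₀, hmin₀⟩ := f.support.exists_min_image (· 0) (support_nonempty.2 hf)
  obtain ⟨e₁, he₁, hmin₁⟩ := f.support.exists_min_image (· 1) (support_nonempty.2 hf)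
  have hc : ∀ i, ![m, n] i ≠ 0 := Fin.forall_fin_two.2 ⟨hm.ne', hn.ne'⟩
  set T := scaleShift ![e₀ 0, e₁ 1] ![m, n]
  have hT : Function.Injective T := scaleShift_injective hc
  have hrange : ↑f.support ⊆ Set.range T := by
    intro e he
    obtain ⟨i, hi⟩ := Nat.exists_eq_add_mul_of_mul_add_mul_eq hcop
      ((hw e he).trans (hw e₀ he₀).symm) (hmin₀ e he)
    obtain ⟨j, hj⟩ := Nat.exists_eq_add_mul_of_mul_add_mul_eq (b := e 0) (b' := e₁ 0) hcop.symm
      (by linarith [hw e he, hw e₁ he₁]) (hmin₁ e he)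
    refine ⟨Finsupp.equivFunOnFinite.symm ![i, j], ?_⟩
    ext l
    fin_cases l
    · simp [T, hi]
    · simp [T, hj]
  have hfq : AddMonoidAlgebra.mapDomain T (AddMonoidAlgebra.comapDomain T hT f) = f :=
    AddMonoidAlgebra.mapDomain_comapDomain hrange hT
  refine ⟨e₀ 0, e₁ 1, AddMonoidAlgebra.comapDomain T hT f, ?_, hfq.symm⟩
  rw [← hfq] at he₀ he₁
  rw [Fin.forall_fin_two]
  exact ⟨not_X_dvd_of_mem_support_mapDomain_scaleShift hc he₀ rfl,
    not_X_dvd_of_mem_support_mapDomain_scaleShift hc he₁ rfl⟩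

end MvPolynomial

open MvPolynomial in
/-- A nonzero ω-quasihomogeneous polynomial `f` of ω-degree `w` (for the weight
`ω(i,j) = n·i + m·j`, `n, m` coprime) can be written uniquely as
`f = x^u · y^v · q(x^m, y^n)` with `q` homogeneous of degree `d` coprime with
`s1·s2`, and `w = n·u + m·v + n·m·d`. -/
theorem stmt_5 (K : Type*) [Field K] (n m w : ℕ) (hn : 0 < n) (hm : 0 < m)
    (hcop : Nat.Coprime n m)
    (f : MvPolynomial (Fin 2) K) (hf : f ≠ 0)
    (hqh : MvPolynomial.IsWeightedHomogeneous ![n, m] f w) :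
    ∃ (u v d : ℕ) (q : MvPolynomial (Fin 2) K),
      (q.IsHomogeneous d ∧ ¬ (MvPolynomial.X 0 ∣ q) ∧ ¬ (MvPolynomial.X 1 ∣ q) ∧
        w = n * u + m * v + n * m * d ∧
        f = MvPolynomial.X 0 ^ u * MvPolynomial.X 1 ^ v *
          MvPolynomial.aeval ![MvPolynomial.X 0 ^ m, MvPolynomial.X 1 ^ n] q) ∧
      (∀ (u' v' d' : ℕ) (q' : MvPolynomial (Fin 2) K),
        (q'.IsHomogeneous d' ∧ ¬ (MvPolynomial.X 0 ∣ q') ∧ ¬ (MvPolynomial.X 1 ∣ q') ∧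
          w = n * u' + m * v' + n * m * d' ∧
          f = MvPolynomial.X 0 ^ u' * MvPolynomial.X 1 ^ v' *
            MvPolynomial.aeval ![MvPolynomial.X 0 ^ m, MvPolynomial.X 1 ^ n] q') →
        u = u' ∧ v = v' ∧ d = d' ∧ q = q') := by
  have hΦ (u v : ℕ) (q : MvPolynomial (Fin 2) K) :
      X 0 ^ u * X 1 ^ v * aeval ![X 0 ^ m, X 1 ^ n] q =
        AddMonoidAlgebra.mapDomain (scaleShift ![u, v] ![m, n]) q := by
    rw [← prod_X_pow_mul_aeval_X_pow, Fin.prod_univ_two]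
    congr 3
    ext i
    fin_cases i <;> rfl
  have hc : ∀ i, ![m, n] i ≠ 0 := Fin.forall_fin_two.2 ⟨hm.ne', hn.ne'⟩
  have hcw : ∀ i, ![m, n] i * ![n, m] i = n * m := Fin.forall_fin_two.2 ⟨mul_comm m n, rfl⟩
  obtain ⟨u, v, q, hX, rfl⟩ :=
    exists_eq_mapDomain_scaleShift_of_isWeightedHomogeneous hn hm hcop hf hqh
  obtain ⟨k, hk⟩ : q.support.Nonempty :=
    support_nonempty.2 fun h0 => hX 0 (by rw [h0]; exact dvd_zero _)
  have hsum : ∑ i, ![u, v] i * ![n, m] i = n * u + m * v := by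
    simp [Fin.sum_univ_two, mul_comm]
  have hw : w = n * u + m * v + n * m * k.degree := by
    have := hqh (d := scaleShift ![u, v] ![m, n] k)
      (by rwa [coeff_mapDomain (scaleShift_injective hc), ← mem_support_iff])
    rwa [weight_scaleShift hcw, hsum, eq_comm] at this
  have hq : q.IsHomogeneous k.degree :=
    isHomogeneous_of_isWeightedHomogeneous_mapDomain_scaleShift hc hcw (by positivity)
      (by rwa [hsum, ← hw])
  refine ⟨u, v, k.degree, q, ⟨hq, hX 0, hX 1, hw, (hΦ u v q).symm⟩, ?_⟩
  rintro u' v' d' q' ⟨-, hX0', hX1', hw', hf'⟩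
  rw [hΦ] at hf'
  obtain ⟨huv, rfl⟩ :=
    eq_of_mapDomain_scaleShift_eq hc hX (Fin.forall_fin_two.2 ⟨hX0', hX1'⟩) hf'
  obtain ⟨rfl, rfl⟩ : u = u' ∧ v = v' := ⟨congrFun huv 0, congrFun huv 1⟩
  have hdd' : n * m * k.degree = n * m * d' := Nat.add_left_cancel (hw.symm.trans hw')
  exact ⟨rfl, rfl, Nat.eq_of_mul_eq_mul_left (by positivity) hdd', rfl⟩
end

section
/- Let K be a field, P(x,y,T) = p(x,y) - T·x^c·U(x,y) ∈ K(T)[[x,y]] with p ∈ K[[x,y]], c > 0, U a unit in K[[x,y]], and x not dividing p. If the Newton polygon of P has an edge ℓ containing the vertex (c,0) (a dicritical edge), then the coefficient polynomial q_ℓ(1,s) ∈ K[T][s] attached to ℓ has the form q_ℓ(1,s) = a_0 s^{d} + a_1 s^{d-1} + ⋯ + a_{d-1} s - (T - a_d) with all a_j ∈ K; in particular only the constant coefficient depends on T, and it is linear in T. -/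
/-! On the line of a dicritical edge through `(c, 0)` every other lattice point has first
coordinate `< c`, so along the edge the `T`-part `x^c·U` of the pencil only contributes
`U(0,0)` at the vertex `(c, 0)`, which carries the constant coefficient of `q_ℓ(1, s)`. -/

open Polynomial

namespace MvPowerSeries

variable {σ R : Type*} [CommSemiring R]

theorem coeff_X_pow_mul_of_lt {i : σ} {c : ℕ} {e : σ →₀ ℕ} (h : e i < c)
    (U : MvPowerSeries σ R) : coeff e (X i ^ c * U) = 0 := by
  rw [X_pow_eq, coeff_monomial_mul, if_neg]
  intro hle
  simpa using (hle i).trans_lt h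

theorem coeff_single_X_pow_mul (i : σ) (c : ℕ) (U : MvPowerSeries σ R) :
    coeff (Finsupp.single i c) (X i ^ c * U) = constantCoeff U := by
  rw [X_pow_eq, coeff_monomial_mul, if_pos le_rfl, one_mul, tsub_self,
    coeff_zero_eq_constantCoeff_apply]

end MvPowerSeries

theorem Polynomial.sum_range_C_sub_C_mul_X_mul_X_pow {R : Type*} [CommRing R] (a b : ℕ → R)
    (d : ℕ) (hb : ∀ k < d, b k = 0) :
    ∑ k ∈ Finset.range (d + 1), C (C (a k) - C (b k) * X) * (X : R[X][X]) ^ (d - k) =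
      ∑ j ∈ Finset.range d, C (C (a j)) * X ^ (d - j) - C (C (b d) * X - C (a d)) := by
  have hinit : ∀ k ∈ Finset.range d,
      C (C (a k) - C (b k) * X) * (X : R[X][X]) ^ (d - k) = C (C (a k)) * X ^ (d - k) := by
    intro k hk
    rw [hb k (Finset.mem_range.mp hk), map_zero, zero_mul, sub_zero]
  rw [Finset.sum_range_succ, Finset.sum_congr rfl hinit, tsub_self, pow_zero, mul_one,
    map_sub, map_sub]
  ring

theorem stmt_11_general (K : Type*) [Field K] (n m c u dl : ℕ)
    (hm : 0 < m)
    (p U : MvPowerSeries (Fin 2) K)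
    (hedge : u + m * dl = c) :
    ∃ a : ℕ → K,
      (∑ k ∈ Finset.range (dl + 1),
        Polynomial.C
          (Polynomial.C ((MvPowerSeries.coeff (R := K)
              (Finsupp.single (0 : Fin 2) (u + m * k) +
                Finsupp.single (1 : Fin 2) (n * (dl - k)))) p) -
            Polynomial.C ((MvPowerSeries.coeff (R := K)
              (Finsupp.single (0 : Fin 2) (u + m * k) +
                Finsupp.single (1 : Fin 2) (n * (dl - k))))
              (MvPowerSeries.X 0 ^ c * U)) * Polynomial.X) *
          Polynomial.X ^ (dl - k)) =
      (∑ j ∈ Finset.range dl,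
          Polynomial.C (Polynomial.C (a j)) * Polynomial.X ^ (dl - j))
        - Polynomial.C
            (Polynomial.C (MvPowerSeries.constantCoeff (σ := Fin 2) (R := K) U) * Polynomial.X
              - Polynomial.C (a dl)) := by
  set e : ℕ → Fin 2 →₀ ℕ := fun k =>
    Finsupp.single 0 (u + m * k) + Finsupp.single 1 (n * (dl - k))
  have hbelow : ∀ k < dl, MvPowerSeries.coeff (e k) (MvPowerSeries.X 0 ^ c * U) = 0 := by
    intro k hk
    apply MvPowerSeries.coeff_X_pow_mul_of_lt
    have : m * k < m * dl := Nat.mul_lt_mul_of_pos_left hk hm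
    rw [Finsupp.add_apply, Finsupp.single_eq_same, Finsupp.single_eq_of_ne (by decide)]
    omega
  have hvertex : MvPowerSeries.coeff (e dl) (MvPowerSeries.X 0 ^ c * U) =
      MvPowerSeries.constantCoeff U := by
    simp only [e, tsub_self, mul_zero, Finsupp.single_zero, add_zero, hedge,
      MvPowerSeries.coeff_single_X_pow_mul]
  refine ⟨fun k => MvPowerSeries.coeff (e k) p, ?_⟩
  rw [← hvertex]
  exact sum_range_C_sub_C_mul_X_mul_X_pow _ _ dl hbelow

/-- For a special pencil `P = p - T·x^c·U` and a dicritical edge `ℓ` on the line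
`n·i + m·j = n·c` containing the vertex `(c,0)` (edge points
`(u + m·k, n·(dℓ - k))`, `k = 0,…,dℓ`, with `u + m·dℓ = c`), the attached
polynomial `q_ℓ(1,s) ∈ K[T][s]` has all coefficients in `K` except the constant
one, which is `-(U(0,0)·T - a_{dℓ})`, i.e. linear in `T`. -/
theorem stmt_11 (K : Type*) [Field K] (n m c u dl : ℕ)
    (hn : 0 < n) (hm : 0 < m) (hcop : Nat.Coprime n m) (hc : 0 < c)
    (p U : MvPowerSeries (Fin 2) K) (hU : IsUnit U)
    (hx : ¬ (MvPowerSeries.X 0 ∣ p))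
    (hedge : u + m * dl = c) :
    ∃ a : ℕ → K,
      (∑ k ∈ Finset.range (dl + 1),
        Polynomial.C
          (Polynomial.C ((MvPowerSeries.coeff (R := K)
              (Finsupp.single (0 : Fin 2) (u + m * k) +
                Finsupp.single (1 : Fin 2) (n * (dl - k)))) p) -
            Polynomial.C ((MvPowerSeries.coeff (R := K)
              (Finsupp.single (0 : Fin 2) (u + m * k) +
                Finsupp.single (1 : Fin 2) (n * (dl - k))))
              (MvPowerSeries.X 0 ^ c * U)) * Polynomial.X) *
          Polynomial.X ^ (dl - k)) =
      (∑ j ∈ Finset.range dl,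
          Polynomial.C (Polynomial.C (a j)) * Polynomial.X ^ (dl - j))
        - Polynomial.C
            (Polynomial.C (MvPowerSeries.constantCoeff (σ := Fin 2) (R := K) U) * Polynomial.X
              - Polynomial.C (a dl)) :=
  stmt_11_general K n m c u dl hm p U hedge
end

section
/- Let K be a field and F ∈ K[[x,y]] with decomposition F = Σ_k F_k into ω-quasihomogeneous components of increasing ω-weight a+b = min weight, for a weight ω(i,j)=n·i+m·j. Suppose the lowest component satisfies F_{a+b} = f_a·g_b with f_a a power of x and g_b quasihomogeneous with g_b(0,1) ≠ 0 (so f_a and g_b are coprime). Then F factors as F = f·g in K[[x,y]] with lowest ω-components f_a and g_b respectively. -/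
/-!
Write `f = γ x^k + f'` with `f'` supported on exponents `u` with `u₀ < k` and weight `> n k`, and
let `g` have order `≥ b`. Above the initial weight, every monomial of `F` is either `x^k x^v`,
whose coefficient in `f g` is `γ g_v` plus products of earlier unknowns, or it has `x`-degree
`< k` and is then `x^u y^p`, where `c y^p` is the pure `y`-term of `g_b` (`c ≠ 0` because
`g_b(0,1) ≠ 0`); its coefficient is `c f'_u` plus products of earlier unknowns. Ordering the
unknowns by the weight of the monomial that determines them, then by `x`-degree, makes the
system triangular, so well-founded recursion solves it.
-/

open Finset MvPowerSeries Finsupp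

theorem WellFounded.exists_fixedPoint {ι α : Type*} [Nonempty α] {r : ι → ι → Prop}
    (hr : WellFounded r) (step : (ι → α) → ι → α)
    (hstep : ∀ φ ψ i, (∀ j, r j i → φ j = ψ j) → step φ i = step ψ i) :
    ∃ φ : ι → α, ∀ i, φ i = step φ i := by
  classical
  obtain ⟨a⟩ := ‹Nonempty α›
  let φ := hr.fix fun i rec => step (fun j => if h : r j i then rec j h else a) i
  refine ⟨φ, fun i => ?_⟩
  rw [show φ i = _ from hr.fix_eq _ i]
  exact hstep _ _ i fun j hj => by simp [hj, φ]

theorem MvPowerSeries.coeff_mul_eq_zero_of_weight_lt {σ R : Type*} [CommSemiring R]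
    (w : σ → ℕ) {f g : MvPowerSeries σ R} {a b : ℕ} (hf : ∀ d, weight w d < a → coeff d f = 0)
    (hg : ∀ d, weight w d < b → coeff d g = 0) {d : σ →₀ ℕ} (hd : weight w d < a + b) :
    coeff d (f * g) = 0 :=
  coeff_eq_zero_of_lt_weightedOrder w <| lt_of_lt_of_le (by exact_mod_cast hd) <|
    (add_le_add (nat_le_weightedOrder w hf) (nat_le_weightedOrder w hg)).trans
      (le_weightedOrder_mul w)

theorem Finsupp.weight_fin_two (n m : ℕ) (e : Fin 2 →₀ ℕ) :
    weight ![n, m] e = n * e 0 + m * e 1 := by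
  simp [weight_apply, sum_fintype, Fin.sum_univ_two, mul_comm]

theorem Finsupp.weight_single_zero_fin_two (n m k : ℕ) :
    weight ![n, m] (single (0 : Fin 2) k) = n * k := by
  simp [weight_single, mul_comm]

theorem Finsupp.weight_single_one_fin_two (n m p : ℕ) :
    weight ![n, m] (single (1 : Fin 2) p) = m * p := by
  simp [weight_single, mul_comm]

theorem MvPolynomial.IsWeightedHomogeneous.exists_coeff_single_one_ne_zero {R : Type*}
    [CommSemiring R] {n m b : ℕ} {q : MvPolynomial (Fin 2) R}
    (hq : q.IsWeightedHomogeneous ![n, m] b) (h01 : eval ![0, 1] q ≠ 0) :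
    ∃ p, m * p = b ∧ q.coeff (single 1 p) ≠ 0 := by
  obtain ⟨d, hd, hd0⟩ : ∃ d ∈ q.support, d 0 = 0 := by
    contrapose! h01
    rw [eval_eq']
    refine Finset.sum_eq_zero fun d hd => ?_
    simp [Fin.prod_univ_two, zero_pow (h01 d hd)]
  have hd1 : d = single 1 (d 1) := by
    ext i; fin_cases i <;> simp [hd0]
  refine ⟨d 1, ?_, hd1 ▸ mem_support_iff.mp hd⟩
  simpa [weight_fin_two, hd0] using hq (mem_support_iff.mp hd)

namespace QuasihomogeneousHensel

variable {K : Type*} [Field K]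

def IsTail (n m k : ℕ) (u : Fin 2 →₀ ℕ) : Prop :=
  u 0 < k ∧ n * k < weight ![n, m] u

/-- The unknowns: `.inl u` is the coefficient of `x^u` in `f - γ x^k`, `.inr v` that of `g`. -/
abbrev Index : Type := (Fin 2 →₀ ℕ) ⊕ (Fin 2 →₀ ℕ)

/-- The weight of the monomial of `F` whose coefficient equation determines the unknown; ties are
broken by `x`-degree, and the coefficients of `g` come after those of `f`. -/
noncomputable def rank (n m k b : ℕ) : Index → ℕ ×ₗ ℕ
  | .inl u => toLex (weight ![n, m] u + b, u 0)
  | .inr v => toLex (weight ![n, m] v + n * k, k)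

open scoped Classical in
noncomputable def tailSeries (n m k : ℕ) (φ : Index → K) : MvPowerSeries (Fin 2) K :=
  fun u => if IsTail n m k u then φ (.inl u) else 0

open scoped Classical in
noncomputable def cofactorSeries (n m b : ℕ) (φ : Index → K) : MvPowerSeries (Fin 2) K :=
  fun v => if b ≤ weight ![n, m] v then φ (.inr v) else 0

/-- Solves the coefficient equation of `F = f g` at `u + (0,p)` for the coefficient of `f` at `u`,
and the one at `v + (k,0)` for the coefficient of `g` at `v`. -/
noncomputable def step (n m k b p : ℕ) (γ : K) (gb : MvPolynomial (Fin 2) K)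
    (F : MvPowerSeries (Fin 2) K) (φ : Index → K) : Index → K
  | .inl u => (gb.coeff (single 1 p))⁻¹ * (coeff (u + single 1 p) F -
      ∑ x ∈ (antidiagonal (u + single 1 p)).erase (u, single 1 p),
        coeff x.1 (tailSeries n m k φ) * coeff x.2 (cofactorSeries n m b φ))
  | .inr v => γ⁻¹ * (coeff (v + single 0 k) F -
      coeff (v + single 0 k) (tailSeries n m k φ * cofactorSeries n m b φ))

variable {n m k b p : ℕ} {γ : K} {gb : MvPolynomial (Fin 2) K} {F : MvPowerSeries (Fin 2) K}
  {φ : Index → K}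

open scoped Classical in
theorem coeff_tailSeries (u : Fin 2 →₀ ℕ) :
    coeff u (tailSeries n m k φ) = if IsTail n m k u then φ (.inl u) else 0 :=
  rfl

open scoped Classical in
theorem coeff_cofactorSeries (v : Fin 2 →₀ ℕ) :
    coeff v (cofactorSeries n m b φ) = if b ≤ weight ![n, m] v then φ (.inr v) else 0 :=
  rfl

theorem coeff_tailSeries_of_weight_le {u : Fin 2 →₀ ℕ} (hu : weight ![n, m] u ≤ n * k) :
    coeff u (tailSeries n m k φ) = 0 := by
  rw [coeff_tailSeries, if_neg fun h => by unfold IsTail at h; omega]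

theorem coeff_cofactorSeries_of_weight_lt {v : Fin 2 →₀ ℕ} (hv : weight ![n, m] v < b) :
    coeff v (cofactorSeries n m b φ) = 0 := by
  rw [coeff_cofactorSeries, if_neg (by omega)]

theorem coeff_tailSeries_mul_cofactorSeries_of_weight_le {e : Fin 2 →₀ ℕ}
    (he : weight ![n, m] e ≤ n * k + b) :
    coeff e (tailSeries n m k φ * cofactorSeries n m b φ) = 0 :=
  coeff_mul_eq_zero_of_weight_lt ![n, m] (a := n * k + 1)
    (fun _ hu => coeff_tailSeries_of_weight_le (by omega))
    (fun _ => coeff_cofactorSeries_of_weight_lt) (by omega)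

theorem rank_lt_rank_inr {v : Fin 2 →₀ ℕ} {x : (Fin 2 →₀ ℕ) × (Fin 2 →₀ ℕ)}
    (hx : x ∈ antidiagonal (v + single 0 k)) (hx₁ : IsTail n m k x.1)
    (hx₂ : b ≤ weight ![n, m] x.2) :
    rank n m k b (.inl x.1) < rank n m k b (.inr v) ∧
      rank n m k b (.inr x.2) < rank n m k b (.inr v) := by
  have hw := congrArg (weight ![n, m]) (HasAntidiagonal.mem_antidiagonal.mp hx)
  rw [map_add, map_add, weight_single_zero_fin_two] at hw
  unfold IsTail at hx₁
  simp only [rank, Prod.Lex.toLex_lt_toLex]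
  omega

theorem rank_lt_rank_inl (hm : 0 < m) (hb : m * p = b) {u : Fin 2 →₀ ℕ}
    {x : (Fin 2 →₀ ℕ) × (Fin 2 →₀ ℕ)}
    (hx : x ∈ (antidiagonal (u + single 1 p)).erase (u, single 1 p))
    (hx₁ : IsTail n m k x.1) (hx₂ : b ≤ weight ![n, m] x.2) :
    rank n m k b (.inl x.1) < rank n m k b (.inl u) ∧
      rank n m k b (.inr x.2) < rank n m k b (.inl u) := by
  obtain ⟨hne, hx⟩ := mem_erase.mp hx
  have hsum := HasAntidiagonal.mem_antidiagonal.mp hx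
  have hw := congrArg (weight ![n, m]) hsum
  have h0 : x.1 0 + x.2 0 = u 0 := by simpa using DFunLike.congr_fun hsum 0
  rw [map_add, map_add, weight_single_one_fin_two, hb] at hw
  unfold IsTail at hx₁
  simp only [rank, Prod.Lex.toLex_lt_toLex]
  refine ⟨?_, by omega⟩
  by_contra! hle
  -- then `x.2` has weight `b` and no `x`, so it is `y^p`
  have hx₂0 : x.2 0 = 0 := by omega
  have hx₂1 : x.2 1 = p := by
    apply Nat.eq_of_mul_eq_mul_left hm
    have := weight_fin_two n m x.2
    rw [hx₂0] at this
    omega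
  have hx₂ : x.2 = single 1 p := by
    ext i; fin_cases i <;> simp [hx₂0, hx₂1]
  exact hne (Prod.ext (add_right_cancel (hsum.trans (hx₂ ▸ rfl))) hx₂)

theorem coeff_tailSeries_mul_coeff_cofactorSeries_congr {ψ : Index → K} {u v : Fin 2 →₀ ℕ}
    (h : IsTail n m k u → b ≤ weight ![n, m] v →
      φ (.inl u) = ψ (.inl u) ∧ φ (.inr v) = ψ (.inr v)) :
    coeff u (tailSeries n m k φ) * coeff v (cofactorSeries n m b φ) =
      coeff u (tailSeries n m k ψ) * coeff v (cofactorSeries n m b ψ) := by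
  simp only [coeff_tailSeries, coeff_cofactorSeries]
  split_ifs with hu hv hv
  · rw [(h hu hv).1, (h hu hv).2]
  all_goals simp

theorem step_congr (hm : 0 < m) (hb : m * p = b) (φ ψ : Index → K) (i : Index)
    (h : ∀ j, rank n m k b j < rank n m k b i → φ j = ψ j) :
    step n m k b p γ gb F φ i = step n m k b p γ gb F ψ i := by
  cases i with
  | inl u =>
    simp only [step]
    congr 2
    refine Finset.sum_congr rfl fun x hx => coeff_tailSeries_mul_coeff_cofactorSeries_congr ?_
    intro hx₁ hx₂
    have := rank_lt_rank_inl hm hb hx hx₁ hx₂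
    exact ⟨h _ this.1, h _ this.2⟩
  | inr v =>
    simp only [step, coeff_mul]
    congr 2
    refine Finset.sum_congr rfl fun x hx => coeff_tailSeries_mul_coeff_cofactorSeries_congr ?_
    intro hx₁ hx₂
    have := rank_lt_rank_inr hx hx₁ hx₂
    exact ⟨h _ this.1, h _ this.2⟩

theorem exists_fixedPoint_step (hm : 0 < m) (hb : m * p = b) :
    ∃ φ : Index → K, ∀ i, φ i = step n m k b p γ gb F φ i :=
  (InvImage.wf (rank n m k b) wellFounded_lt).exists_fixedPoint _ (step_congr hm hb)

theorem coeff_cofactorSeries_eq (hγ : γ ≠ 0) (hφ : ∀ i, φ i = step n m k b p γ gb F φ i)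
    {v : Fin 2 →₀ ℕ} (hv : b ≤ weight ![n, m] v) :
    γ * coeff v (cofactorSeries n m b φ) +
        coeff (v + single 0 k) (tailSeries n m k φ * cofactorSeries n m b φ) =
      coeff (v + single 0 k) F := by
  rw [coeff_cofactorSeries, if_pos hv, hφ (.inr v), step, mul_inv_cancel_left₀ hγ,
    sub_add_cancel]

theorem coeff_cofactorSeries_of_weight_eq (hγ : γ ≠ 0)
    (hinit : ∀ e, weight ![n, m] e = n * k + b →
      coeff e F = (MvPolynomial.monomial (single 0 k) γ * gb).coeff e)
    (hφ : ∀ i, φ i = step n m k b p γ gb F φ i) {v : Fin 2 →₀ ℕ}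
    (hv : weight ![n, m] v = b) :
    coeff v (cofactorSeries n m b φ) = gb.coeff v := by
  have hw : weight ![n, m] (v + single 0 k) = n * k + b := by
    rw [map_add, weight_single_zero_fin_two, hv, add_comm]
  have := coeff_cofactorSeries_eq hγ hφ hv.ge
  rw [coeff_tailSeries_mul_cofactorSeries_of_weight_le hw.le, add_zero, hinit _ hw, add_comm,
    MvPolynomial.coeff_monomial_mul] at this
  exact mul_left_cancel₀ hγ this

theorem coeff_tailSeries_mul_cofactorSeries_eq (hb : m * p = b) (hγ : γ ≠ 0)
    (hc : gb.coeff (single 1 p) ≠ 0)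
    (hinit : ∀ e, weight ![n, m] e = n * k + b →
      coeff e F = (MvPolynomial.monomial (single 0 k) γ * gb).coeff e)
    (hφ : ∀ i, φ i = step n m k b p γ gb F φ i) {u : Fin 2 →₀ ℕ} (hu : IsTail n m k u) :
    coeff (u + single 1 p) (tailSeries n m k φ * cofactorSeries n m b φ) =
      coeff (u + single 1 p) F := by
  have hg : coeff (single 1 p) (cofactorSeries n m b φ) = gb.coeff (single 1 p) :=
    coeff_cofactorSeries_of_weight_eq hγ hinit hφ (by rw [weight_single_one_fin_two, hb])
  rw [coeff_mul, ← Finset.add_sum_erase _ _ (a := (u, single 1 p))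
    (HasAntidiagonal.mem_antidiagonal.mpr rfl), hg,
    coeff_tailSeries, if_pos hu, hφ (.inl u), step]
  field_simp
  ring

theorem exists_isTail_eq_add_single (hm : 0 < m) (hb : m * p = b) {e : Fin 2 →₀ ℕ}
    (he : e 0 < k) (hw : n * k + b < weight ![n, m] e) :
    ∃ u, IsTail n m k u ∧ e = u + single 1 p := by
  have hp : p ≤ e 1 := by
    by_contra! h
    have := Nat.mul_le_mul_left n he.le
    have := Nat.mul_lt_mul_of_pos_left h hm
    rw [weight_fin_two] at hw
    omega
  have he' := tsub_add_cancel_of_le (single_le_iff.mpr hp)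
  refine ⟨e - single 1 p, ⟨by simpa using he, ?_⟩, he'.symm⟩
  have := congrArg (weight ![n, m]) he'
  rw [map_add, weight_single_one_fin_two, hb] at this
  omega

theorem eq_monomial_add_tailSeries_mul_cofactorSeries (hm : 0 < m) (hb : m * p = b) (hγ : γ ≠ 0)
    (hc : gb.coeff (single 1 p) ≠ 0)
    (hlow : ∀ e, weight ![n, m] e < n * k + b → coeff e F = 0)
    (hinit : ∀ e, weight ![n, m] e = n * k + b →
      coeff e F = (MvPolynomial.monomial (single 0 k) γ * gb).coeff e)
    (hφ : ∀ i, φ i = step n m k b p γ gb F φ i) :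
    F = (monomial (single 0 k) γ + tailSeries n m k φ) * cofactorSeries n m b φ := by
  ext e
  rw [add_mul, map_add, coeff_monomial_mul]
  split_ifs with hδ
  · obtain ⟨v, rfl⟩ : ∃ v, e = v + single 0 k := ⟨_, (tsub_add_cancel_of_le hδ).symm⟩
    rw [add_tsub_cancel_right]
    by_cases hv : b ≤ weight ![n, m] v
    · exact (coeff_cofactorSeries_eq hγ hφ hv).symm
    · have hw : weight ![n, m] (v + single 0 k) < n * k + b := by
        rw [map_add, weight_single_zero_fin_two]; omega
      rw [coeff_cofactorSeries_of_weight_lt (by omega), mul_zero, zero_add,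
        coeff_tailSeries_mul_cofactorSeries_of_weight_le hw.le, hlow _ hw]
  · rw [zero_add]
    rcases le_or_gt (weight ![n, m] e) (n * k + b) with hw | hw
    · rw [coeff_tailSeries_mul_cofactorSeries_of_weight_le hw]
      rcases hw.lt_or_eq with hw | hw
      · exact hlow e hw
      · rw [hinit e hw, MvPolynomial.coeff_monomial_mul', if_neg hδ]
    · have he : e 0 < k := by simpa [single_le_iff] using hδ
      obtain ⟨u, hu, rfl⟩ := exists_isTail_eq_add_single hm hb he hw
      exact (coeff_tailSeries_mul_cofactorSeries_eq hb hγ hc hinit hφ hu).symm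

end QuasihomogeneousHensel

open QuasihomogeneousHensel

theorem stmt_13_general (K : Type*) [Field K] (n m k b : ℕ)
    (hm : 0 < m)
    (γ : K) (hγ : γ ≠ 0)
    (gb : MvPolynomial (Fin 2) K)
    (hgb : MvPolynomial.IsWeightedHomogeneous ![n, m] gb b)
    (hgx : MvPolynomial.eval ![(0 : K), 1] gb ≠ 0)
    (F : MvPowerSeries (Fin 2) K)
    (hlow : ∀ e : Fin 2 →₀ ℕ, n * e 0 + m * e 1 < n * k + b →
      MvPowerSeries.coeff e F = 0)
    (hinit : ∀ e : Fin 2 →₀ ℕ, n * e 0 + m * e 1 = n * k + b →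
      MvPowerSeries.coeff e F =
        MvPolynomial.coeff e (MvPolynomial.C γ * MvPolynomial.X 0 ^ k * gb)) :
    ∃ f g : MvPowerSeries (Fin 2) K, F = f * g ∧
      (∀ e : Fin 2 →₀ ℕ, n * e 0 + m * e 1 < n * k → MvPowerSeries.coeff e f = 0) ∧
      (∀ e : Fin 2 →₀ ℕ, n * e 0 + m * e 1 = n * k →
        MvPowerSeries.coeff e f =
          MvPolynomial.coeff e (MvPolynomial.C γ * MvPolynomial.X 0 ^ k)) ∧
      (∀ e : Fin 2 →₀ ℕ, n * e 0 + m * e 1 < b → MvPowerSeries.coeff e g = 0) ∧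
      (∀ e : Fin 2 →₀ ℕ, n * e 0 + m * e 1 = b →
        MvPowerSeries.coeff e g = MvPolynomial.coeff e gb) := by
  obtain ⟨p, hb, hc⟩ := hgb.exists_coeff_single_one_ne_zero hgx
  simp only [← weight_fin_two, MvPolynomial.C_mul_X_pow_eq_monomial] at hlow hinit ⊢
  obtain ⟨φ, hφ⟩ :=
    exists_fixedPoint_step (K := K) (k := k) (γ := γ) (gb := gb) (F := F) hm hb
  refine ⟨monomial (single 0 k) γ + tailSeries n m k φ, cofactorSeries n m b φ,
    eq_monomial_add_tailSeries_mul_cofactorSeries hm hb hγ hc hlow hinit hφ, fun e he => ?_,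
    fun e he => ?_, fun e => coeff_cofactorSeries_of_weight_lt,
    fun e => coeff_cofactorSeries_of_weight_eq hγ hinit hφ⟩
  · rw [map_add, coeff_tailSeries_of_weight_le he.le, add_zero, coeff_monomial, if_neg]
    rintro rfl
    rw [weight_single_zero_fin_two] at he
    exact he.false
  · rw [map_add, coeff_tailSeries_of_weight_le he.le, add_zero, ← MvPolynomial.coe_monomial,
      MvPolynomial.coeff_coe]

/-- Special case of quasihomogeneous Hensel (Claim 2 of the appendix): if the lowest
ω-component of `F` is `f_a · g_b` with `f_a = γ·x^k` a power of `x` and `g_b`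
ω-quasihomogeneous with `g_b(0,1) ≠ 0`, then `F = f·g` in `K[[x,y]]` with lowest
ω-components `f_a` and `g_b` respectively. -/
theorem stmt_13 (K : Type*) [Field K] (n m k b : ℕ)
    (hn : 0 < n) (hm : 0 < m) (hk : 1 ≤ k)
    (γ : K) (hγ : γ ≠ 0)
    (gb : MvPolynomial (Fin 2) K)
    (hgb : MvPolynomial.IsWeightedHomogeneous ![n, m] gb b)
    (hgx : MvPolynomial.eval ![(0 : K), 1] gb ≠ 0)
    (F : MvPowerSeries (Fin 2) K)
    (hlow : ∀ e : Fin 2 →₀ ℕ, n * e 0 + m * e 1 < n * k + b →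
      MvPowerSeries.coeff e F = 0)
    (hinit : ∀ e : Fin 2 →₀ ℕ, n * e 0 + m * e 1 = n * k + b →
      MvPowerSeries.coeff e F =
        MvPolynomial.coeff e (MvPolynomial.C γ * MvPolynomial.X 0 ^ k * gb)) :
    ∃ f g : MvPowerSeries (Fin 2) K, F = f * g ∧
      (∀ e : Fin 2 →₀ ℕ, n * e 0 + m * e 1 < n * k → MvPowerSeries.coeff e f = 0) ∧
      (∀ e : Fin 2 →₀ ℕ, n * e 0 + m * e 1 = n * k →
        MvPowerSeries.coeff e f =
          MvPolynomial.coeff e (MvPolynomial.C γ * MvPolynomial.X 0 ^ k)) ∧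
      (∀ e : Fin 2 →₀ ℕ, n * e 0 + m * e 1 < b → MvPowerSeries.coeff e g = 0) ∧
      (∀ e : Fin 2 →₀ ℕ, n * e 0 + m * e 1 = b →
        MvPowerSeries.coeff e g = MvPolynomial.coeff e gb) :=
  stmt_13_general K n m k b hm γ hγ gb hgb hgx F hlow hinit
end
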